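/- arXiv:1809.06946 — 3 statements merged into one kernel-verified Lean document; each statement's English description precedes it below -/
import Mathlib

section
/- For m ≥ 1 and n ≥ 2, the forgetful map g : PConfₙ₊₁(D^m) → PConfₙ(D^m), (p₀,p₁,…,pₙ) ↦ (p₁,…,pₙ), admits a continuous section. Explicitly, setting d₁ = min{‖p_k − p₁‖ : k ≠ 1} and v = p₂ − p₁, the map (p₁,…,pₙ) ↦ (p₁ + (d₁ / (2‖v‖)) v, p₁, …, pₙ) is such a section. -/
open Metric Function

noncomputable section

abbrev E (m : ℕ) := EuclideanSpace ℝ (Fin m)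
def Dball (m : ℕ) : Set (E m) := Metric.closedBall 0 1
def PConf (m n : ℕ) : Set (Fin n → E m) :=
  {p | (∀ i, p i ∈ Dball m) ∧ Function.Injective p}

/-- The minimal distance `d₁ = min {‖p_k − p₁‖ : k ≠ 1}` from the first point to the
others (here the first point has index `0`, and there are `n + 2 ≥ 2` points). -/
def minDist {m n : ℕ} (p : Fin (n + 2) → E m) : ℝ :=
  (Finset.univ.filter (fun k : Fin (n + 2) => k ≠ 0)).inf'
    ⟨1, by simp⟩ (fun k => ‖p k - p 0‖)

/-- The added point `p₁ + (d₁/(2‖v‖)) v` with `v = p₂ − p₁`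
(indices `0` and `1` play the roles of `p₁` and `p₂`). -/
def addedPoint {m n : ℕ} (p : Fin (n + 2) → E m) : E m :=
  p 0 + (minDist p / (2 * ‖p 1 - p 0‖)) • (p 1 - p 0)

/-
The added point lies on the segment from `p 0` to `p 1`, at distance `d₁ / 2` from `p 0`. Since
`d₁ ≤ ‖p 1 - p 0‖` it stays in the (convex) ball, and since every other `p k` is at distance
`≥ d₁ > d₁ / 2` from `p 0` it differs from all of them. On configurations `p 1 ≠ p 0`, so the
formula is continuous.
-/

section AddedPoint

variable {m n : ℕ}

lemma minDist_le (p : Fin (n + 2) → E m) {k : Fin (n + 2)} (hk : k ≠ 0) :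
    minDist p ≤ ‖p k - p 0‖ :=
  Finset.inf'_le _ (by simp [hk])

lemma minDist_nonneg (p : Fin (n + 2) → E m) : 0 ≤ minDist p :=
  Finset.le_inf' _ _ fun _ _ => norm_nonneg _

lemma minDist_pos {p : Fin (n + 2) → E m} (hp : Injective p) : 0 < minDist p :=
  (Finset.lt_inf'_iff _).2 fun _ hk =>
    norm_sub_pos_iff.2 fun h => (Finset.mem_filter.1 hk).2 (hp h)

lemma continuous_minDist : Continuous (minDist : (Fin (n + 2) → E m) → ℝ) :=
  Continuous.finset_inf'_apply _ fun _ _ => by fun_prop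

lemma addedPoint_eq_lineMap (p : Fin (n + 2) → E m) :
    addedPoint p = AffineMap.lineMap (p 0) (p 1) (minDist p / (2 * ‖p 1 - p 0‖)) := by
  rw [AffineMap.lineMap_apply_module', addedPoint, add_comm]

lemma addedPoint_mem_segment {p : Fin (n + 2) → E m} (hp : Injective p) :
    addedPoint p ∈ segment ℝ (p 0) (p 1) := by
  have hv : 0 < ‖p 1 - p 0‖ := norm_sub_pos_iff.2 (hp.ne one_ne_zero)
  rw [addedPoint_eq_lineMap]
  refine lineMap_mem_segment ℝ _ _ ⟨div_nonneg (minDist_nonneg p) (by positivity), ?_⟩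
  rw [div_le_one (by positivity)]
  linarith [minDist_le p one_ne_zero, minDist_pos hp]

lemma norm_addedPoint_sub {p : Fin (n + 2) → E m} (h : p 1 ≠ p 0) :
    ‖addedPoint p - p 0‖ = minDist p / 2 := by
  have hv : 0 < ‖p 1 - p 0‖ := norm_sub_pos_iff.2 h
  rw [addedPoint, add_sub_cancel_left, norm_smul,
    Real.norm_of_nonneg (div_nonneg (minDist_nonneg p) (by positivity))]
  field_simp

lemma addedPoint_notMem_range {p : Fin (n + 2) → E m} (hp : Injective p) :
    addedPoint p ∉ Set.range p := by
  rintro ⟨k, hk⟩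
  have hd := minDist_pos hp
  have hq := norm_addedPoint_sub (hp.ne one_ne_zero)
  rcases eq_or_ne k 0 with rfl | hk0
  · rw [← hk, sub_self, norm_zero] at hq
    linarith
  · rw [← hk] at hq
    linarith [minDist_le p hk0]

lemma continuousAt_addedPoint {p : Fin (n + 2) → E m} (h : p 1 ≠ p 0) :
    ContinuousAt addedPoint p := by
  have hv : 2 * ‖p 1 - p 0‖ ≠ 0 := by positivity [norm_sub_pos_iff.2 h]
  have hv_cont : Continuous fun q : Fin (n + 2) → E m => q 1 - q 0 := by fun_prop
  unfold addedPoint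
  exact (continuous_apply 0).continuousAt.add
    ((continuous_minDist.continuousAt.div (continuous_const.mul hv_cont.norm).continuousAt hv).smul
      hv_cont.continuousAt)

lemma addedPoint_mem_Dball {p : Fin (n + 2) → E m} (hp : p ∈ PConf m (n + 2)) :
    addedPoint p ∈ Dball m :=
  (convex_closedBall 0 1).segment_subset (hp.1 0) (hp.1 1) (addedPoint_mem_segment hp.2)

lemma cons_mem_PConf {q : E m} {p : Fin n → E m} (hq : q ∈ Dball m) (hqp : q ∉ Set.range p)
    (hp : p ∈ PConf m n) : (Fin.cons q p : Fin (n + 1) → E m) ∈ PConf m (n + 1) :=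
  ⟨Fin.cases hq hp.1, Fin.cons_injective_iff.2 ⟨hqp, hp.2⟩⟩

end AddedPoint

theorem ordered_section_general (m n : ℕ) :
    ∃ s : ↥(PConf m (n + 2)) → ↥(PConf m (n + 3)),
      Continuous s ∧
      (∀ p : ↥(PConf m (n + 2)),
        (s p : Fin (n + 3) → E m) = Fin.cons (addedPoint (p : Fin (n + 2) → E m)) p) ∧
      (∀ p : ↥(PConf m (n + 2)),
        (s p : Fin (n + 3) → E m) ∘ Fin.succ = (p : Fin (n + 2) → E m)) := by
  refine ⟨fun p => ⟨_, cons_mem_PConf (addedPoint_mem_Dball p.2)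
      (addedPoint_notMem_range p.2.2) p.2⟩, ?_, fun _ => rfl, fun _ => rfl⟩
  refine (continuous_iff_continuousAt.2 fun p => ?_).subtype_mk _
  exact ((continuousAt_addedPoint (p.2.2.ne one_ne_zero)).comp
    continuous_subtype_val.continuousAt).finCons continuous_subtype_val.continuousAt

/-- For `m ≥ 1` and any number `n + 2 ≥ 2` of points, the forgetful map
`PConfₙ₊₁(D^m) → PConfₙ(D^m)` admits a continuous section, given explicitly by
adding the point `p₁ + (d₁/(2‖v‖)) v`. -/
theorem ordered_section (m n : ℕ) (hm : 1 ≤ m) :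
    ∃ s : ↥(PConf m (n + 2)) → ↥(PConf m (n + 3)),
      Continuous s ∧
      (∀ p : ↥(PConf m (n + 2)),
        (s p : Fin (n + 3) → E m) = Fin.cons (addedPoint (p : Fin (n + 2) → E m)) p) ∧
      (∀ p : ↥(PConf m (n + 2)),
        (s p : Fin (n + 3) → E m) ∘ Fin.succ = (p : Fin (n + 2) → E m)) :=
  ordered_section_general m n
end
end

section
/- Let g : PConfₙ₊₁(D^m) → PConfₙ(D^m) be the map forgetting the 0th point, which is Σₙ-equivariant for the action permuting the last n coordinates, and let ḡ : PConfₙ₊₁(D^m)/Σₙ → Confₙ(D^m) be the induced map of quotients. If ḡ admits a continuous section, then g admits a Σₙ-equivariant continuous section. -/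
open Metric Function

noncomputable section

/-- The ordered configuration space of `n + 1` points `(p₀, p₁, …, pₙ)` in the closed
ball, encoded as a distinguished point `p₀` together with the remaining configuration. -/
def TotConf (m n : ℕ) : Set (E m × (Fin n → E m)) :=
  {x | x.1 ∈ Dball m ∧ (∀ i, x.2 i ∈ Dball m) ∧ Function.Injective x.2 ∧ ∀ i, x.1 ≠ x.2 i}

/-- The map forgetting the distinguished `0`th point. -/
def forget (m n : ℕ) (x : ↥(TotConf m n)) : ↥(PConf m n) :=
  ⟨x.1.2, x.2.2.1, x.2.2.2.1⟩

instance (m n : ℕ) : SMul (Equiv.Perm (Fin n)) ↥(PConf m n) :=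
  ⟨fun τ p => ⟨(p : Fin n → E m) ∘ ⇑τ⁻¹,
    fun i => p.2.1 _, p.2.2.comp (Equiv.injective _)⟩⟩

/-- `Σₙ` acts on ordered configurations by permuting the indices. -/
instance (m n : ℕ) : MulAction (Equiv.Perm (Fin n)) ↥(PConf m n) where
  one_smul p := Subtype.ext (by funext i; show (p : Fin n → E m) _ = _; simp)
  mul_smul τ ρ p := Subtype.ext (by
    funext i; show (p : Fin n → E m) _ = (p : Fin n → E m) _; simp [mul_inv_rev])

instance (m n : ℕ) : SMul (Equiv.Perm (Fin n)) ↥(TotConf m n) :=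
  ⟨fun τ x => ⟨(x.1.1, x.1.2 ∘ ⇑τ⁻¹),
    ⟨x.2.1, fun i => x.2.2.1 _, x.2.2.2.1.comp (Equiv.injective _),
      fun i => x.2.2.2.2 _⟩⟩⟩

/-- `Σₙ` acts on configurations of `n + 1` points by permuting the last `n` indices. -/
instance (m n : ℕ) : MulAction (Equiv.Perm (Fin n)) ↥(TotConf m n) where
  one_smul x := Subtype.ext (by
    refine Prod.ext rfl ?_
    funext i; show (x : E m × (Fin n → E m)).2 _ = _; simp)
  mul_smul τ ρ x := Subtype.ext (by
    refine Prod.ext rfl ?_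
    funext i
    show (x : E m × (Fin n → E m)).2 _ = (x : E m × (Fin n → E m)).2 _
    simp [mul_inv_rev])

/-- The unordered configuration space `Confₙ(D^m) = PConfₙ(D^m)/Σₙ`. -/
abbrev ConfQ (m n : ℕ) := Quotient (MulAction.orbitRel (Equiv.Perm (Fin n)) ↥(PConf m n))

/-- The quotient `PConfₙ₊₁(D^m)/Σₙ` by the action on the last `n` coordinates. -/
abbrev TotQ (m n : ℕ) := Quotient (MulAction.orbitRel (Equiv.Perm (Fin n)) ↥(TotConf m n))

/-- The induced map `ḡ : PConfₙ₊₁(D^m)/Σₙ → Confₙ(D^m)`. -/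
def gbar (m n : ℕ) : TotQ m n → ConfQ m n :=
  Quotient.map (forget m n) (by
    intro a b hab
    obtain ⟨τ, hτ⟩ := hab
    exact ⟨τ, by rw [← hτ]; rfl⟩)

/-!
The quotient `PConfₙ(D^m) → Confₙ(D^m)` is a covering map, because `Σₙ` is finite and acts
freely. Given a section `s̄` of `ḡ`, each configuration `p` has exactly one point `s p` of the
orbit `s̄ ⟦p⟧` with `g (s p) = p`: two such points differ by an element of `Σₙ` fixing `p`.
Uniqueness makes `s` equivariant. For continuity, take a neighbourhood `W` of `p` disjoint from
its nontrivial translates: for `p'` near `p`, the orbit `s̄ ⟦p'⟧` meets a small neighbourhood of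
`s p` in a point `x` with `g x ∈ W` and `g x` in the orbit of `p'`, which forces `g x = p'`,
so `x = s p'`.
-/

local notation "π[" G "]" => Quotient.mk (MulAction.orbitRel G _)

section LiftSection

variable {G X Y : Type*} [Group G] [MulAction G X] [MulAction G Y]

def liftSection (f : X → Y)
    (sbar : Quotient (MulAction.orbitRel G Y) → Quotient (MulAction.orbitRel G X)) (y : Y) : X :=
  haveI : Nonempty X := ⟨(sbar (π[G] y)).out⟩
  Classical.epsilon fun x => π[G] x = sbar (π[G] y) ∧ f x = y

variable {f : X → Y} (hf : ∀ (g : G) x, f (g • x) = g • f x)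
  {fbar : Quotient (MulAction.orbitRel G X) → Quotient (MulAction.orbitRel G Y)}
  (hfbar : ∀ x, fbar (π[G] x) = π[G] (f x))
  {sbar : Quotient (MulAction.orbitRel G Y) → Quotient (MulAction.orbitRel G X)}
  (hsec : ∀ q, fbar (sbar q) = q)

include hfbar hsec in
theorem exists_smul_eq_of_mk_eq_section {x : X} {y : Y} (h : π[G] x = sbar (π[G] y)) :
    ∃ g : G, g • y = f x :=
  Quotient.exact (by rw [← hfbar, h, hsec] : π[G] (f x) = π[G] y)

include hf in
theorem eq_of_mk_eq_of_apply_eq [IsCancelSMul G Y] {x x' : X} (hx : π[G] x = π[G] x')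
    (hfx : f x = f x') : x = x' := by
  obtain ⟨g, rfl⟩ : ∃ g : G, g • x' = x := Quotient.exact hx
  rw [hf] at hfx
  rw [IsCancelSMul.eq_one_of_smul hfx, one_smul]

include hf hfbar hsec in
theorem liftSection_spec (y : Y) :
    π[G] (liftSection f sbar y) = sbar (π[G] y) ∧ f (liftSection f sbar y) = y := by
  refine Classical.epsilon_spec (p := fun x => π[G] x = sbar (π[G] y) ∧ f x = y) ?_
  obtain ⟨x, hx⟩ := Quotient.exists_rep (sbar (π[G] y))
  obtain ⟨g, hg⟩ := exists_smul_eq_of_mk_eq_section hfbar hsec hx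
  refine ⟨g⁻¹ • x, ?_, ?_⟩
  · rw [← hx]
    exact Quotient.sound ⟨g⁻¹, rfl⟩
  · rw [hf, ← hg, inv_smul_smul]

include hf hfbar hsec in
theorem eq_liftSection [IsCancelSMul G Y] {x : X} {y : Y} (hx : π[G] x = sbar (π[G] y))
    (hfx : f x = y) : x = liftSection f sbar y := by
  obtain ⟨hmk, happ⟩ := liftSection_spec hf hfbar hsec y
  exact eq_of_mk_eq_of_apply_eq hf (hx.trans hmk.symm) (hfx.trans happ.symm)

include hf hfbar hsec in
theorem liftSection_smul [IsCancelSMul G Y] (g : G) (y : Y) :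
    liftSection f sbar (g • y) = g • liftSection f sbar y := by
  obtain ⟨hmk, happ⟩ := liftSection_spec hf hfbar hsec y
  refine (eq_liftSection hf hfbar hsec ?_ ?_).symm
  · rw [(Quotient.sound ⟨g, rfl⟩ : π[G] (g • y) = π[G] y), ← hmk]
    exact Quotient.sound ⟨g, rfl⟩
  · rw [hf, happ]

variable [TopologicalSpace X] [TopologicalSpace Y]

include hf hfbar hsec in
theorem continuous_liftSection [ContinuousConstSMul G X] (hf_cont : Continuous f)
    (hsbar : Continuous sbar) (hY : IsQuotientCoveringMap (π[G] : Y → _) G) :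
    Continuous (liftSection f sbar) := by
  have := hY.isCancelSMul
  refine continuous_iff_continuousAt.2 fun y U hU => Filter.mem_map.2 ?_
  obtain ⟨W, hW, hW_disj⟩ := hY.disjoint y
  obtain ⟨hmk, happ⟩ := liftSection_spec hf hfbar hsec y
  set U' := interior U ∩ f ⁻¹' interior W
  have hU' : IsOpen (π[G] '' U') := isOpenMap_quotient_mk'_mul _
    (isOpen_interior.inter (isOpen_interior.preimage hf_cont))
  have hmem : sbar (π[G] y) ∈ π[G] '' U' :=
    ⟨liftSection f sbar y, ⟨mem_interior_iff_mem_nhds.2 hU,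
      by rw [Set.mem_preimage, happ]; exact mem_interior_iff_mem_nhds.2 hW⟩, hmk⟩
  have hnear := (hsbar.comp continuous_quotient_mk').continuousAt.preimage_mem_nhds
    (hU'.mem_nhds hmem)
  filter_upwards [hW, hnear] with y' hy'W ⟨x, ⟨hxU, hxW⟩, hx⟩
  obtain ⟨g, hg⟩ := exists_smul_eq_of_mk_eq_section hfbar hsec hx
  have hg1 : g = 1 := hW_disj g ⟨g • y', ⟨y', hy'W, rfl⟩, hg ▸ interior_subset hxW⟩
  rw [hg1, one_smul] at hg
  rw [Set.mem_preimage, ← eq_liftSection hf hfbar hsec hx hg.symm]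
  exact interior_subset hxU

end LiftSection

theorem isOpen_setOf_injective {ι Z : Type*} [Finite ι] [TopologicalSpace Z] [T2Space Z] :
    IsOpen {p : ι → Z | Injective p} := by
  simp only [Injective, Set.ofPred_forall]
  refine isOpen_iInter_of_finite fun i => isOpen_iInter_of_finite fun j => ?_
  by_cases hij : i = j
  · simp [hij]
  · simpa [hij] using isOpen_ne_fun (continuous_apply i) (continuous_apply j)

namespace PConf

variable {m n : ℕ}

instance : LocallyCompactSpace (PConf m n) :=
  have hball : IsClosed {p : Fin n → E m | ∀ i, p i ∈ Dball m} := by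
    rw [Set.ofPred_forall]
    exact isClosed_iInter fun i => isClosed_closedBall.preimage (continuous_apply i)
  (hball.isLocallyClosed.inter isOpen_setOf_injective.isLocallyClosed).locallyCompactSpace

instance : ContinuousConstSMul (Equiv.Perm (Fin n)) (PConf m n) where
  continuous_const_smul τ := continuous_induced_rng.2 <| continuous_pi fun i =>
    (continuous_apply (τ⁻¹ i)).comp continuous_subtype_val

instance : IsCancelSMul (Equiv.Perm (Fin n)) (PConf m n) :=
  isCancelSMul_iff_eq_one_of_smul_eq.2 fun τ p hτ => Equiv.ext fun i => by
    simpa using (p.2.2 (congrFun (congrArg Subtype.val hτ) (τ i))).symm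

theorem isQuotientCoveringMap_mk :
    IsQuotientCoveringMap (π[Equiv.Perm (Fin n)] : PConf m n → _) (Equiv.Perm (Fin n)) :=
  isQuotientCoveringMap_quotientMk_of_properlyDiscontinuousSMul

end PConf

instance {m n : ℕ} : ContinuousConstSMul (Equiv.Perm (Fin n)) (TotConf m n) where
  continuous_const_smul τ := continuous_induced_rng.2 <|
    (continuous_fst.comp continuous_subtype_val).prodMk <| continuous_pi fun i =>
      (continuous_apply (τ⁻¹ i)).comp (continuous_snd.comp continuous_subtype_val)

theorem continuous_forget {m n : ℕ} : Continuous (forget m n) :=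
  (continuous_snd.comp continuous_subtype_val).subtype_mk _

theorem forget_smul {m n : ℕ} (τ : Equiv.Perm (Fin n)) (x : TotConf m n) :
    forget m n (τ • x) = τ • forget m n x :=
  rfl

theorem gbar_mk {m n : ℕ} (x : TotConf m n) :
    gbar m n (π[Equiv.Perm (Fin n)] x) = π[Equiv.Perm (Fin n)] (forget m n x) :=
  rfl

theorem equivariant_section_of_quotient_section_general (m n : ℕ)
    (hsec : ∃ sbar : ConfQ m n → TotQ m n,
      Continuous sbar ∧ ∀ q, gbar m n (sbar q) = q) :
    ∃ s : ↥(PConf m n) → ↥(TotConf m n),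
      Continuous s ∧ (∀ p, forget m n (s p) = p) ∧
      ∀ (τ : Equiv.Perm (Fin n)) (p : ↥(PConf m n)), s (τ • p) = τ • s p := by
  obtain ⟨sbar, hsbar, hsec⟩ := hsec
  exact ⟨liftSection (forget m n) sbar,
    continuous_liftSection forget_smul gbar_mk hsec continuous_forget hsbar
      PConf.isQuotientCoveringMap_mk,
    fun p => (liftSection_spec forget_smul gbar_mk hsec p).2,
    liftSection_smul forget_smul gbar_mk hsec⟩

/-- If `ḡ : PConfₙ₊₁(D^m)/Σₙ → Confₙ(D^m)` admits a continuous section, then the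
`Σₙ`-equivariant forgetful map `g : PConfₙ₊₁(D^m) → PConfₙ(D^m)` admits a
`Σₙ`-equivariant continuous section. -/
theorem equivariant_section_of_quotient_section (m n : ℕ) (hm : 1 ≤ m) (hn : 1 ≤ n)
    (hsec : ∃ sbar : ConfQ m n → TotQ m n,
      Continuous sbar ∧ ∀ q, gbar m n (sbar q) = q) :
    ∃ s : ↥(PConf m n) → ↥(TotConf m n),
      Continuous s ∧ (∀ p, forget m n (s p) = p) ∧
      ∀ (τ : Equiv.Perm (Fin n)) (p : ↥(PConf m n)), s (τ • p) = τ • s p :=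
  equivariant_section_of_quotient_section_general m n hsec
end
end

section
/- For m ≥ 1, every continuous section of the forgetful map g : PConf₃(D^m) → PConf₂(D^m) is homotopic, through sections, to the midpoint section M(p₁,p₂) = ((p₁+p₂)/2, p₁, p₂); moreover if the section is Σ₂-equivariant then the homotopy can be taken through Σ₂-equivariant sections. -/
open Metric Function unitInterval

noncomputable section

/-- The `Σ₂`-action swapping the two points of a configuration. -/
def swap2 (m : ℕ) (p : ↥(PConf m 2)) : ↥(PConf m 2) :=
  ⟨(p : Fin 2 → E m) ∘ Equiv.swap 0 1,
    fun i => p.2.1 _, p.2.2.comp (Equiv.injective _)⟩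

/-- The corresponding `Σ₂`-action on three-point configurations, swapping the last
two points and fixing the added point `p₀`. -/
def swap3 (m : ℕ) (q : ↥(PConf m 3)) : ↥(PConf m 3) :=
  ⟨(q : Fin 3 → E m) ∘ Equiv.swap 1 2,
    fun i => q.2.1 _, q.2.2.comp (Equiv.injective _)⟩


/-!
The straight-line homotopy from the added point `s(p)₀` to the midpoint of `p₁, p₂` may run into
`p₁` or `p₂`, but it cannot when both lie on the unit sphere: by strict convexity the midpoint
is then in the open ball, hence so is every point of the segment other than `s(p)₀`. So first
conjugate `s` by affine maps `h_t`, depending continuously and symmetrically on `p`: rescale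
about `0` until the farther point reaches the sphere, then stretch about that point until the
nearer one reaches it too. Each `h_t⁻¹` is a composite of homotheties with centre in the ball
and ratio in `(0, 1]`, so it maps the ball into itself and `h_t⁻¹ ∘ s ∘ h_t` is again a
section; since `h_t` is affine, the final slide to the midpoint commutes with it.
-/

open AffineMap (homothety lineMap)
open scoped RealInnerProductSpace

section ExitRatio

variable {V : Type*} [NormedAddCommGroup V] [InnerProductSpace ℝ V] {x y : V}

/-- The ratio of the homothety centred at `x` that sends `y` onto the sphere through `x`
(`norm_homothety_exitRatio`). -/
def exitRatio (x y : V) : ℝ := 2 * ⟪x, x - y⟫ / ‖x - y‖ ^ 2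

lemma exitRatio_mul_norm_sub_sq (x y : V) : exitRatio x y * ‖x - y‖ ^ 2 = 2 * ⟪x, x - y⟫ := by
  rcases eq_or_ne x y with rfl | hxy
  · simp [exitRatio]
  · exact div_mul_cancel₀ _ (by simpa [sub_eq_zero] using hxy)

lemma exitRatio_sub_one (hxy : x ≠ y) :
    exitRatio x y - 1 = (‖x‖ ^ 2 - ‖y‖ ^ 2) / ‖x - y‖ ^ 2 := by
  have hd : ‖x - y‖ ^ 2 ≠ 0 := by simpa [sub_eq_zero] using hxy
  rw [eq_div_iff hd, sub_mul, exitRatio_mul_norm_sub_sq, inner_sub_right,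
    real_inner_self_eq_norm_sq, norm_sub_sq_real]
  ring

lemma one_le_exitRatio (hxy : x ≠ y) (h : ‖y‖ ≤ ‖x‖) : 1 ≤ exitRatio x y := by
  have hsq : ‖y‖ ^ 2 ≤ ‖x‖ ^ 2 := pow_le_pow_left₀ (norm_nonneg y) h 2
  have : 0 ≤ exitRatio x y - 1 := by
    rw [exitRatio_sub_one hxy]
    exact div_nonneg (sub_nonneg.2 hsq) (sq_nonneg _)
  linarith

lemma exitRatio_eq_one (hxy : x ≠ y) (h : ‖x‖ = ‖y‖) : exitRatio x y = 1 :=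
  sub_eq_zero.1 (by rw [exitRatio_sub_one hxy, h, sub_self, zero_div])

lemma norm_homothety_sq (x y : V) (r : ℝ) :
    ‖homothety x r y‖ ^ 2 = ‖x‖ ^ 2 - r * (exitRatio x y - r) * ‖x - y‖ ^ 2 := by
  have hsq : ‖r • (y - x)‖ ^ 2 = r ^ 2 * ‖x - y‖ ^ 2 := by
    rw [norm_smul, mul_pow, Real.norm_eq_abs, sq_abs, norm_sub_rev]
  have hin : ⟪r • (y - x), x⟫ = -(r * ⟪x, x - y⟫) := by
    rw [real_inner_smul_left, real_inner_comm, ← neg_sub x y, inner_neg_right]; ring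
  rw [AffineMap.homothety_apply, vsub_eq_sub, vadd_eq_add, norm_add_sq_real, hsq, hin]
  linear_combination r * exitRatio_mul_norm_sub_sq x y

lemma norm_homothety_le_of_le_exitRatio {r : ℝ} (hr0 : 0 ≤ r) (hr : r ≤ exitRatio x y) :
    ‖homothety x r y‖ ≤ ‖x‖ := by
  have hsq := norm_homothety_sq x y r
  have : 0 ≤ r * (exitRatio x y - r) * ‖x - y‖ ^ 2 := by
    have : 0 ≤ exitRatio x y - r := sub_nonneg.2 hr
    positivity
  exact (pow_le_pow_iff_left₀ (norm_nonneg _) (norm_nonneg _) two_ne_zero).1 (by linarith)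

lemma norm_homothety_exitRatio (x y : V) : ‖homothety x (exitRatio x y) y‖ = ‖x‖ := by
  have hsq := norm_homothety_sq x y (exitRatio x y)
  rw [sub_self, mul_zero, zero_mul, sub_zero] at hsq
  exact (pow_left_inj₀ (norm_nonneg _) (norm_nonneg _) two_ne_zero).1 hsq

lemma continuousOn_exitRatio :
    ContinuousOn (fun q : V × V => exitRatio q.1 q.2) {q | q.1 ≠ q.2} := by
  refine ContinuousOn.div (by fun_prop) (by fun_prop) fun q hq => ?_
  simpa [sub_eq_zero] using hq

end ExitRatio

section Ball

variable {W : Type*} [NormedAddCommGroup W] [NormedSpace ℝ W] {x y : W} {R t : ℝ}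

lemma norm_lineMap_le (hx : ‖x‖ ≤ R) (hy : ‖y‖ ≤ R) (ht0 : 0 ≤ t) (ht1 : t ≤ 1) :
    ‖lineMap x y t‖ ≤ R := by
  simp only [← mem_closedBall_zero_iff] at hx hy ⊢
  exact (convex_closedBall 0 R).lineMap_mem hx hy ⟨ht0, ht1⟩

lemma norm_lineMap_lt (hx : ‖x‖ ≤ R) (hy : ‖y‖ < R) (ht0 : 0 < t) (ht1 : t ≤ 1) :
    ‖lineMap x y t‖ < R := by
  rw [AffineMap.lineMap_apply_module]
  calc ‖(1 - t) • x + t • y‖ ≤ (1 - t) * ‖x‖ + t * ‖y‖ := by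
        refine (norm_add_le _ _).trans_eq ?_
        rw [norm_smul, norm_smul, Real.norm_of_nonneg (by linarith), Real.norm_of_nonneg ht0.le]
    _ < R := by nlinarith

lemma norm_midpoint_lt [StrictConvexSpace ℝ W] (hx : ‖x‖ ≤ R) (hy : ‖y‖ ≤ R) (hxy : x ≠ y) :
    ‖midpoint ℝ x y‖ < R := by
  rw [midpoint_eq_smul_add, smul_add]
  exact norm_combo_lt_of_ne hx hy hxy (by norm_num) (by norm_num) (by norm_num)

lemma homothety_zero_apply (r : ℝ) (x : W) : homothety 0 r x = r • x := by
  simp [AffineMap.homothety_apply]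

lemma norm_homothety_le {c y : W} {r R : ℝ} (hc : ‖c‖ ≤ R) (hy : ‖y‖ ≤ R) (hr0 : 0 ≤ r)
    (hr1 : r ≤ 1) : ‖homothety c r y‖ ≤ R := by
  rw [AffineMap.homothety_eq_lineMap]
  exact norm_lineMap_le hc hy hr0 hr1

variable {X : Type*} [TopologicalSpace X] {c y : X → W} {r : X → ℝ}

/-- Only `(r - 1) • c` has to be continuous: the centre may jump where the ratio is `1`. -/
lemma Continuous.homothety_apply (hr : Continuous r) (hc : Continuous fun x => (r x - 1) • c x)
    (hy : Continuous y) : Continuous fun x => homothety (c x) (r x) (y x) := by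
  have h (x : X) : homothety (c x) (r x) (y x) = r x • y x - (r x - 1) • c x := by
    rw [AffineMap.homothety_apply, vsub_eq_sub, vadd_eq_add]; module
  exact ((hr.smul hy).sub hc).congr fun x => (h x).symm

lemma Continuous.homothety_inv_apply (hr : Continuous r) (hr0 : ∀ x, r x ≠ 0)
    (hc : Continuous fun x => (r x - 1) • c x) (hy : Continuous y) :
    Continuous fun x => homothety (c x) (r x)⁻¹ (y x) := by
  refine (hr.inv₀ hr0).homothety_apply ?_ hy
  have h (x : X) : ((r x)⁻¹ - 1) • c x = -(r x)⁻¹ • ((r x - 1) • c x) := by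
    rw [smul_smul]; congr 1; field_simp [hr0 x]; ring
  exact ((hr.inv₀ hr0).neg.smul hc).congr fun x => (h x).symm

end Ball

namespace MidpointSection

variable {m : ℕ}

lemma norm_apply_le_one {n : ℕ} (p : ↥(PConf m n)) (i : Fin n) : ‖p.1 i‖ ≤ 1 := by
  simpa [Dball] using p.2.1 i

lemma apply_zero_ne_apply_one (p : ↥(PConf m 2)) :
    p.1 0 ≠ p.1 1 :=
  p.2.2.ne (by decide)

lemma cons_mem_PConf {n : ℕ} (p : ↥(PConf m n)) {x : E m} (hx : ‖x‖ ≤ 1)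
    (hne : ∀ i, x ≠ p.1 i) : Fin.cons x p.1 ∈ PConf m (n + 1) := by
  refine ⟨Fin.cases (by simpa [Dball] using hx) fun i => by simpa using p.2.1 i, ?_⟩
  exact Fin.cons_injective_iff.2 ⟨fun ⟨i, hi⟩ => hne i hi.symm, p.2.2⟩

lemma swap2_apply_zero (p : ↥(PConf m 2)) :
    (swap2 m p).1 0 = p.1 1 := rfl

lemma swap2_apply_one (p : ↥(PConf m 2)) :
    (swap2 m p).1 1 = p.1 0 := rfl

lemma cons_comp_swap {α : Type*} (x : α) (v : Fin 2 → α) :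
    (Fin.cons x v : Fin 3 → α) ∘ Equiv.swap 1 2 = Fin.cons x (v ∘ Equiv.swap 0 1) := by
  funext j
  fin_cases j <;> rfl

def radius (p : ↥(PConf m 2)) : ℝ := max ‖p.1 0‖ ‖p.1 1‖

lemma norm_le_radius (p : ↥(PConf m 2)) (i : Fin 2) : ‖p.1 i‖ ≤ radius p := by
  fin_cases i
  exacts [le_max_left _ _, le_max_right _ _]

lemma radius_pos (p : ↥(PConf m 2)) : 0 < radius p := by
  by_contra! h
  have h0 i : p.1 i = 0 := norm_le_zero_iff.1 ((norm_le_radius p i).trans h)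
  exact apply_zero_ne_apply_one p ((h0 0).trans (h0 1).symm)

lemma radius_le_one (p : ↥(PConf m 2)) : radius p ≤ 1 :=
  max_le (norm_apply_le_one p 0) (norm_apply_le_one p 1)

lemma radius_swap2 (p : ↥(PConf m 2)) : radius (swap2 m p) = radius p := max_comm _ _

lemma continuous_apply_coe {n : ℕ} (i : Fin n) :
    Continuous fun p : ↥(PConf m n) => p.1 i :=
  (continuous_apply i).comp continuous_subtype_val

lemma continuous_radius : Continuous (radius (m := m)) :=
  (continuous_apply_coe 0).norm.max (continuous_apply_coe 1).norm

def unitPair (p : ↥(PConf m 2)) : E m × E m :=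
  if ‖p.1 1‖ ≤ ‖p.1 0‖ then
    ((radius p)⁻¹ • p.1 0, (radius p)⁻¹ • p.1 1)
  else ((radius p)⁻¹ • p.1 1, (radius p)⁻¹ • p.1 0)

lemma unitPair_of_le {p : ↥(PConf m 2)} (h : ‖p.1 1‖ ≤ ‖p.1 0‖) :
    unitPair p = ((radius p)⁻¹ • p.1 0, (radius p)⁻¹ • p.1 1) :=
  if_pos h

lemma unitPair_of_lt {p : ↥(PConf m 2)} (h : ‖p.1 0‖ < ‖p.1 1‖) :
    unitPair p = ((radius p)⁻¹ • p.1 1, (radius p)⁻¹ • p.1 0) :=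
  if_neg h.not_ge

lemma norm_unitPair_fst (p : ↥(PConf m 2)) : ‖(unitPair p).1‖ = 1 := by
  have hr := radius_pos p
  rw [← inv_mul_cancel₀ hr.ne']
  unfold unitPair
  split_ifs with h <;> rw [norm_smul, norm_inv, Real.norm_of_nonneg hr.le] <;> congr 1
  exacts [(max_eq_left h).symm, (max_eq_right (not_le.1 h).le).symm]

lemma norm_unitPair_snd_le (p : ↥(PConf m 2)) : ‖(unitPair p).2‖ ≤ ‖(unitPair p).1‖ := by
  have hr := inv_pos.2 (radius_pos p)
  rcases le_or_gt ‖p.1 1‖ ‖p.1 0‖ with h | h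
  · rw [unitPair_of_le h, norm_smul, norm_smul]; gcongr
  · rw [unitPair_of_lt h, norm_smul, norm_smul]; gcongr

lemma unitPair_fst_ne_snd (p : ↥(PConf m 2)) : (unitPair p).1 ≠ (unitPair p).2 := by
  have hr := inv_ne_zero (radius_pos p).ne'
  have hne := apply_zero_ne_apply_one p
  unfold unitPair
  split_ifs
  · exact (smul_right_injective _ hr).ne hne
  · exact (smul_right_injective _ hr).ne hne.symm

lemma inv_radius_smul_eq_unitPair (p : ↥(PConf m 2)) (i : Fin 2) :
    (radius p)⁻¹ • p.1 i = (unitPair p).1 ∨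
      (radius p)⁻¹ • p.1 i = (unitPair p).2 := by
  unfold unitPair
  split_ifs <;> fin_cases i <;> simp

section Symmetric

variable {X : Type*} {f : E m × E m → X}

lemma continuous_comp_unitPair [TopologicalSpace X] (hf : ContinuousOn f {q | q.1 ≠ q.2})
    (hsymm : ∀ x y : E m, x ≠ y → ‖x‖ = ‖y‖ → f (x, y) = f (y, x)) :
    Continuous fun p : ↥(PConf m 2) => f (unitPair p) := by
  have hsc (i : Fin 2) : Continuous fun p : ↥(PConf m 2) => (radius p)⁻¹ • p.1 i :=
    (continuous_radius.inv₀ fun p => (radius_pos p).ne').smul (continuous_apply_coe i)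
  have hne (p : ↥(PConf m 2)) :
      (radius p)⁻¹ • p.1 0 ≠ (radius p)⁻¹ • p.1 1 :=
    (smul_right_injective _ (inv_ne_zero (radius_pos p).ne')).ne (apply_zero_ne_apply_one p)
  simp only [unitPair, apply_ite f]
  refine Continuous.if_le (hf.comp_continuous ((hsc 0).prodMk (hsc 1)) hne)
    (hf.comp_continuous ((hsc 1).prodMk (hsc 0)) fun p => (hne p).symm)
    (continuous_apply_coe 1).norm (continuous_apply_coe 0).norm fun p hp => hsymm _ _ (hne p) ?_
  rw [norm_smul, norm_smul, hp]

lemma comp_unitPair_swap2 (hsymm : ∀ x y : E m, x ≠ y → ‖x‖ = ‖y‖ → f (x, y) = f (y, x))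
    (p : ↥(PConf m 2)) : f (unitPair (swap2 m p)) = f (unitPair p) := by
  have h0 := swap2_apply_zero p
  have h1 := swap2_apply_one p
  rcases lt_trichotomy ‖p.1 0‖ ‖p.1 1‖ with h | h | h
  · rw [unitPair_of_le (by rw [h0, h1]; exact h.le), unitPair_of_lt h, h0, h1, radius_swap2]
  · rw [unitPair_of_le (by rw [h0, h1, h]), unitPair_of_le h.ge, h0, h1, radius_swap2]
    refine hsymm _ _ ?_ (by rw [norm_smul, norm_smul, h])
    exact (smul_right_injective _ (inv_ne_zero (radius_pos p).ne')).ne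
      (apply_zero_ne_apply_one p).symm
  · rw [unitPair_of_lt (by rwa [h0, h1]), unitPair_of_le h.le, h0, h1, radius_swap2]

end Symmetric

/-- The homotopy runs in three stages, over `[0, 1/3]`, `[1/3, 2/3]` and `[2/3, 1]`;
`ramp k` rises from `0` to `1` during stage `k`. -/
def ramp (k τ : ℝ) : ℝ := max 0 (min 1 (3 * τ - k))

lemma ramp_nonneg (k τ : ℝ) : 0 ≤ ramp k τ := le_max_left _ _

lemma ramp_le_one (k τ : ℝ) : ramp k τ ≤ 1 := max_le zero_le_one (min_le_left _ _)

lemma ramp_eq_one_of_pos {j k τ : ℝ} (hjk : j + 1 ≤ k) (h : 0 < ramp k τ) : ramp j τ = 1 := by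
  have : 0 < 3 * τ - k := by
    by_contra! h'
    exact h.ne' (max_eq_left (min_le_of_right_le h'))
  rw [ramp, min_eq_left (by linarith), max_eq_right zero_le_one]

lemma continuous_ramp (k : ℝ) : Continuous (ramp k) := by
  unfold ramp; fun_prop

def scaleRatio (p : ↥(PConf m 2)) (w : ℝ) : ℝ := 1 + w * ((radius p)⁻¹ - 1)

def stretchRatio (p : ↥(PConf m 2)) (w : ℝ) : ℝ :=
  1 + w * (exitRatio (unitPair p).1 (unitPair p).2 - 1)

lemma one_le_inv_radius (p : ↥(PConf m 2)) : 1 ≤ (radius p)⁻¹ :=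
  (one_le_inv₀ (radius_pos p)).2 (radius_le_one p)

lemma one_le_exitRatio_unitPair (p : ↥(PConf m 2)) :
    1 ≤ exitRatio (unitPair p).1 (unitPair p).2 :=
  one_le_exitRatio (unitPair_fst_ne_snd p) (norm_unitPair_snd_le p)

lemma one_le_scaleRatio (p : ↥(PConf m 2)) {w : ℝ} (hw : 0 ≤ w) : 1 ≤ scaleRatio p w := by
  have := one_le_inv_radius p
  unfold scaleRatio; nlinarith

lemma one_le_stretchRatio (p : ↥(PConf m 2)) {w : ℝ} (hw : 0 ≤ w) : 1 ≤ stretchRatio p w := by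
  have := one_le_exitRatio_unitPair p
  unfold stretchRatio; nlinarith

lemma stretchRatio_le_exitRatio (p : ↥(PConf m 2)) {w : ℝ} (hw : w ≤ 1) :
    stretchRatio p w ≤ exitRatio (unitPair p).1 (unitPair p).2 := by
  have := one_le_exitRatio_unitPair p
  unfold stretchRatio; nlinarith

lemma scaleRatio_mul_radius_le_one (p : ↥(PConf m 2)) {w : ℝ} (hw : w ≤ 1) :
    scaleRatio p w * radius p ≤ 1 := by
  have hr := radius_pos p
  have : scaleRatio p w * radius p = radius p + w * (1 - radius p) := by
    unfold scaleRatio; field_simp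
  nlinarith [radius_le_one p]

def conjMap (p : ↥(PConf m 2)) (τ : ℝ) : E m →ᵃ[ℝ] E m :=
  (homothety (unitPair p).1 (stretchRatio p (ramp 1 τ))).comp
    (homothety 0 (scaleRatio p (ramp 0 τ)))

def conjInv (p : ↥(PConf m 2)) (τ : ℝ) : E m →ᵃ[ℝ] E m :=
  (homothety 0 (scaleRatio p (ramp 0 τ))⁻¹).comp
    (homothety (unitPair p).1 (stretchRatio p (ramp 1 τ))⁻¹)

lemma conjMap_conjInv (p : ↥(PConf m 2)) (τ : ℝ) (y : E m) : conjMap p τ (conjInv p τ y) = y := by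
  have hscale := (zero_lt_one.trans_le (one_le_scaleRatio p (ramp_nonneg 0 τ))).ne'
  have hstretch := (zero_lt_one.trans_le (one_le_stretchRatio p (ramp_nonneg 1 τ))).ne'
  simp only [conjMap, conjInv, AffineMap.coe_comp, Function.comp_apply,
    ← AffineMap.homothety_mul_apply, mul_inv_cancel₀ hscale, mul_inv_cancel₀ hstretch,
    AffineMap.homothety_one, AffineMap.id_apply]

lemma conjMap_at_zero (p : ↥(PConf m 2)) : conjMap p 0 = AffineMap.id ℝ (E m) := by
  simp [conjMap, scaleRatio, stretchRatio, ramp]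

lemma conjInv_at_zero (p : ↥(PConf m 2)) : conjInv p 0 = AffineMap.id ℝ (E m) := by
  simp [conjInv, scaleRatio, stretchRatio, ramp]

lemma conjInv_conjMap (p : ↥(PConf m 2)) (τ : ℝ) (x : E m) : conjInv p τ (conjMap p τ x) = x := by
  have hscale := (zero_lt_one.trans_le (one_le_scaleRatio p (ramp_nonneg 0 τ))).ne'
  have hstretch := (zero_lt_one.trans_le (one_le_stretchRatio p (ramp_nonneg 1 τ))).ne'
  simp only [conjMap, conjInv, AffineMap.coe_comp, Function.comp_apply,
    ← AffineMap.homothety_mul_apply, inv_mul_cancel₀ hscale, inv_mul_cancel₀ hstretch,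
    AffineMap.homothety_one, AffineMap.id_apply]

lemma conjMap_of_ramp_pos (p : ↥(PConf m 2)) {τ : ℝ} (h : 0 < ramp 1 τ) (x : E m) :
    conjMap p τ x = homothety (unitPair p).1 (stretchRatio p (ramp 1 τ)) ((radius p)⁻¹ • x) := by
  rw [conjMap, AffineMap.coe_comp, Function.comp_apply, homothety_zero_apply,
    ramp_eq_one_of_pos (j := 0) (by norm_num) h, scaleRatio, one_mul, add_sub_cancel]

lemma norm_homothety_unitPair_le (p : ↥(PConf m 2)) {μ : ℝ} (hμ0 : 0 ≤ μ)
    (hμ : μ ≤ exitRatio (unitPair p).1 (unitPair p).2) (i : Fin 2) :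
    ‖homothety (unitPair p).1 μ ((radius p)⁻¹ • p.1 i)‖ ≤ 1 := by
  rcases inv_radius_smul_eq_unitPair p i with h | h
  · rw [h, AffineMap.homothety_apply_same, norm_unitPair_fst]
  · rw [h, ← norm_unitPair_fst p]
    exact norm_homothety_le_of_le_exitRatio hμ0 hμ

lemma norm_homothety_unitPair_exitRatio (p : ↥(PConf m 2)) (i : Fin 2) :
    ‖homothety (unitPair p).1 (exitRatio (unitPair p).1 (unitPair p).2)
      ((radius p)⁻¹ • p.1 i)‖ = 1 := by
  rcases inv_radius_smul_eq_unitPair p i with h | h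
  · rw [h, AffineMap.homothety_apply_same, norm_unitPair_fst]
  · rw [h, norm_homothety_exitRatio, norm_unitPair_fst]

lemma norm_conjMap_apply_le (p : ↥(PConf m 2)) (τ : ℝ) (i : Fin 2) :
    ‖conjMap p τ (p.1 i)‖ ≤ 1 := by
  rcases (ramp_nonneg 1 τ).eq_or_lt with h | h
  · have hscale := one_le_scaleRatio p (ramp_nonneg 0 τ)
    have hstretch : stretchRatio p (ramp 1 τ) = 1 := by simp [stretchRatio, ← h]
    rw [conjMap, AffineMap.coe_comp, Function.comp_apply, hstretch, AffineMap.homothety_one,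
      AffineMap.id_apply, homothety_zero_apply, norm_smul, Real.norm_of_nonneg (by linarith)]
    calc scaleRatio p (ramp 0 τ) * ‖p.1 i‖
        ≤ scaleRatio p (ramp 0 τ) * radius p := by gcongr; exact norm_le_radius p i
      _ ≤ 1 := scaleRatio_mul_radius_le_one p (ramp_le_one 0 τ)
  · rw [conjMap_of_ramp_pos p h]
    exact norm_homothety_unitPair_le p (zero_le_one.trans (one_le_stretchRatio p h.le))
      (stretchRatio_le_exitRatio p (ramp_le_one 1 τ)) i

lemma norm_conjMap_apply_eq_one (p : ↥(PConf m 2)) {τ : ℝ} (h : ramp 1 τ = 1) (i : Fin 2) :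
    ‖conjMap p τ (p.1 i)‖ = 1 := by
  rw [conjMap_of_ramp_pos p (by rw [h]; exact one_pos), h, stretchRatio, one_mul, add_sub_cancel]
  exact norm_homothety_unitPair_exitRatio p i

lemma norm_conjInv_apply_le (p : ↥(PConf m 2)) (τ : ℝ) {y : E m} (hy : ‖y‖ ≤ 1) :
    ‖conjInv p τ y‖ ≤ 1 := by
  have hscale := one_le_scaleRatio p (ramp_nonneg 0 τ)
  have hstretch := one_le_stretchRatio p (ramp_nonneg 1 τ)
  rw [conjInv, AffineMap.coe_comp, Function.comp_apply]
  refine norm_homothety_le (by simp) ?_ (by positivity) (inv_le_one_of_one_le₀ hscale)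
  exact norm_homothety_le (norm_unitPair_fst p).le hy (by positivity)
    (inv_le_one_of_one_le₀ hstretch)

lemma homothety_unitPair_swap2 (p : ↥(PConf m 2)) (g : ℝ → ℝ) (hg : g 1 = 1) :
    homothety (unitPair (swap2 m p)).1
        (g (exitRatio (unitPair (swap2 m p)).1 (unitPair (swap2 m p)).2)) =
      homothety (unitPair p).1 (g (exitRatio (unitPair p).1 (unitPair p).2)) :=
  comp_unitPair_swap2 (f := fun q => homothety q.1 (g (exitRatio q.1 q.2)))
    (fun x y hxy h => by
      simp only [exitRatio_eq_one hxy h, exitRatio_eq_one hxy.symm h.symm, hg,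
        AffineMap.homothety_one]) p

lemma conjMap_swap2 (p : ↥(PConf m 2)) (τ : ℝ) : conjMap (swap2 m p) τ = conjMap p τ := by
  simp only [conjMap, stretchRatio, scaleRatio, radius_swap2,
    homothety_unitPair_swap2 p (fun F => 1 + ramp 1 τ * (F - 1)) (by simp)]

lemma conjInv_swap2 (p : ↥(PConf m 2)) (τ : ℝ) : conjInv (swap2 m p) τ = conjInv p τ := by
  simp only [conjInv, stretchRatio, scaleRatio, radius_swap2,
    homothety_unitPair_swap2 p (fun F => (1 + ramp 1 τ * (F - 1))⁻¹) (by simp)]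

lemma continuous_exitRatio_unitPair :
    Continuous fun p : ↥(PConf m 2) => exitRatio (unitPair p).1 (unitPair p).2 :=
  continuous_comp_unitPair continuousOn_exitRatio fun x y hxy h => by
    rw [exitRatio_eq_one hxy h, exitRatio_eq_one hxy.symm h.symm]

lemma continuous_exitRatio_sub_one_smul_unitPair :
    Continuous fun p : ↥(PConf m 2) =>
      (exitRatio (unitPair p).1 (unitPair p).2 - 1) • (unitPair p).1 :=
  continuous_comp_unitPair (f := fun q => (exitRatio q.1 q.2 - 1) • q.1)
    ((continuousOn_exitRatio.sub continuousOn_const).smul continuousOn_fst) fun x y hxy h => by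
      simp only [exitRatio_eq_one hxy h, exitRatio_eq_one hxy.symm h.symm, sub_self, zero_smul]

section Continuity

variable {X : Type*} [TopologicalSpace X] {p : X → ↥(PConf m 2)} {τ : X → ℝ} {x : X → E m}

lemma continuous_scaleRatio_ramp (hp : Continuous p) (hτ : Continuous τ) :
    Continuous fun z => scaleRatio (p z) (ramp 0 (τ z)) :=
  continuous_const.add (((continuous_ramp 0).comp hτ).mul
    (((continuous_radius.comp hp).inv₀ fun z => (radius_pos (p z)).ne').sub continuous_const))

lemma continuous_stretchRatio_ramp (hp : Continuous p) (hτ : Continuous τ) :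
    Continuous fun z => stretchRatio (p z) (ramp 1 (τ z)) :=
  continuous_const.add (((continuous_ramp 1).comp hτ).mul
    ((continuous_exitRatio_unitPair.comp hp).sub continuous_const))

lemma continuous_stretchRatio_sub_one_smul (hp : Continuous p) (hτ : Continuous τ) :
    Continuous fun z => (stretchRatio (p z) (ramp 1 (τ z)) - 1) • (unitPair (p z)).1 := by
  simp only [stretchRatio, add_sub_cancel_left, mul_smul]
  exact ((continuous_ramp 1).comp hτ).smul (continuous_exitRatio_sub_one_smul_unitPair.comp hp)

lemma continuous_conjMap_apply (hp : Continuous p) (hτ : Continuous τ) (hx : Continuous x) :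
    Continuous fun z => conjMap (p z) (τ z) (x z) := by
  simp only [conjMap, AffineMap.coe_comp, Function.comp_apply]
  exact (continuous_stretchRatio_ramp hp hτ).homothety_apply
    (continuous_stretchRatio_sub_one_smul hp hτ)
    ((continuous_scaleRatio_ramp hp hτ).homothety_apply (by simpa using continuous_const) hx)

lemma continuous_conjInv_apply (hp : Continuous p) (hτ : Continuous τ) (hx : Continuous x) :
    Continuous fun z => conjInv (p z) (τ z) (x z) := by
  simp only [conjInv, AffineMap.coe_comp, Function.comp_apply]
  exact (continuous_scaleRatio_ramp hp hτ).homothety_inv_apply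
    (fun z => (zero_lt_one.trans_le (one_le_scaleRatio _ (ramp_nonneg 0 _))).ne')
    (by simpa using continuous_const)
    ((continuous_stretchRatio_ramp hp hτ).homothety_inv_apply
      (fun z => (zero_lt_one.trans_le (one_le_stretchRatio _ (ramp_nonneg 1 _))).ne')
      (continuous_stretchRatio_sub_one_smul hp hτ) hx)

end Continuity

def conjConfig (p : ↥(PConf m 2)) (τ : ℝ) : ↥(PConf m 2) :=
  ⟨fun i => conjMap p τ (p.1 i),
    fun i => by simpa [Dball] using norm_conjMap_apply_le p τ i,
    (Function.LeftInverse.injective (conjInv_conjMap p τ)).comp p.2.2⟩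

lemma conjConfig_at_zero (p : ↥(PConf m 2)) : conjConfig p 0 = p :=
  Subtype.ext (funext fun i => by simp [conjConfig, conjMap_at_zero])

lemma conjConfig_swap2 (p : ↥(PConf m 2)) (τ : ℝ) :
    conjConfig (swap2 m p) τ = swap2 m (conjConfig p τ) :=
  Subtype.ext (funext fun i => by simp only [conjConfig, conjMap_swap2]; rfl)

lemma continuous_conjConfig : Continuous fun z : ↥(PConf m 2) × ℝ => conjConfig z.1 z.2 :=
  (continuous_pi fun i => continuous_conjMap_apply continuous_fst continuous_snd
    ((continuous_apply_coe i).comp continuous_fst)).subtype_mk _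

variable (s : ↥(PConf m 2) → ↥(PConf m 3))

def homotopyPoint (p : ↥(PConf m 2)) (τ : ℝ) : E m :=
  lineMap (conjInv p τ ((s (conjConfig p τ)).1 0))
    (midpoint ℝ (p.1 0) (p.1 1)) (ramp 2 τ)

lemma conjMap_homotopyPoint (p : ↥(PConf m 2)) (τ : ℝ) :
    conjMap p τ (homotopyPoint s p τ) =
      lineMap ((s (conjConfig p τ)).1 0)
        (midpoint ℝ ((conjConfig p τ).1 0) ((conjConfig p τ).1 1))
        (ramp 2 τ) := by
  rw [homotopyPoint, AffineMap.apply_lineMap, AffineMap.map_midpoint, conjMap_conjInv]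
  rfl

lemma norm_homotopyPoint_le (p : ↥(PConf m 2)) (τ : ℝ) : ‖homotopyPoint s p τ‖ ≤ 1 :=
  norm_lineMap_le (norm_conjInv_apply_le p τ (norm_apply_le_one _ 0))
    (norm_midpoint_lt (norm_apply_le_one p 0) (norm_apply_le_one p 1)
      (apply_zero_ne_apply_one p)).le (ramp_nonneg 2 τ) (ramp_le_one 2 τ)

lemma homotopyPoint_ne
    (hsec : ∀ p : ↥(PConf m 2), (s p).1 ∘ Fin.succ = p.1)
    (p : ↥(PConf m 2)) (τ : ℝ) (i : Fin 2) : homotopyPoint s p τ ≠ p.1 i := by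
  intro h
  set q := conjConfig p τ
  have hq : lineMap ((s q).1 0) (midpoint ℝ (q.1 0) (q.1 1)) (ramp 2 τ) = q.1 i := by
    rw [← conjMap_homotopyPoint, h]; rfl
  rcases (ramp_nonneg 2 τ).eq_or_lt with h0 | hpos
  · rw [← h0, AffineMap.lineMap_apply_zero, ← congrFun (hsec q) i] at hq
    exact Fin.succ_ne_zero i ((s q).2.2 hq).symm
  · -- in stage 2 both points of `q` lie on the unit sphere, while the slide stays inside it
    have hsphere (j : Fin 2) : ‖q.1 j‖ = 1 :=
      norm_conjMap_apply_eq_one p (ramp_eq_one_of_pos (by norm_num) hpos) j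
    have hlt := norm_lineMap_lt (norm_apply_le_one (s q) 0)
      (norm_midpoint_lt (hsphere 0).le (hsphere 1).le (apply_zero_ne_apply_one q)) hpos
      (ramp_le_one 2 τ)
    rw [hq, hsphere] at hlt
    exact lt_irrefl _ hlt

lemma homotopyPoint_at_zero (p : ↥(PConf m 2)) : homotopyPoint s p 0 = (s p).1 0 := by
  simp [homotopyPoint, conjConfig_at_zero, conjInv_at_zero, ramp]

lemma homotopyPoint_at_one (p : ↥(PConf m 2)) :
    homotopyPoint s p 1 = midpoint ℝ (p.1 0) (p.1 1) := by
  norm_num [homotopyPoint, ramp]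

lemma homotopyPoint_swap2 (hequiv : ∀ p, s (swap2 m p) = swap3 m (s p))
    (p : ↥(PConf m 2)) (τ : ℝ) : homotopyPoint s (swap2 m p) τ = homotopyPoint s p τ := by
  rw [homotopyPoint, homotopyPoint, conjConfig_swap2, hequiv, conjInv_swap2, swap2_apply_zero,
    swap2_apply_one, midpoint_comm]
  rfl

lemma continuous_homotopyPoint (hcont : Continuous s) :
    Continuous fun z : ↥(PConf m 2) × ℝ => homotopyPoint s z.1 z.2 :=
  Continuous.lineMap (continuous_conjInv_apply continuous_fst continuous_snd
      ((continuous_apply_coe 0).comp (hcont.comp continuous_conjConfig)))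
    (Continuous.lineMap ((continuous_apply_coe 0).comp continuous_fst)
      ((continuous_apply_coe 1).comp continuous_fst) continuous_const)
    ((continuous_ramp 2).comp continuous_snd)

variable (hsec : ∀ p : ↥(PConf m 2), (s p).1 ∘ Fin.succ = p.1)

def sectionHomotopy (z : ↥(PConf m 2) × I) : ↥(PConf m 3) :=
  ⟨Fin.cons (homotopyPoint s z.1 z.2) z.1.1,
    cons_mem_PConf z.1 (norm_homotopyPoint_le s z.1 z.2) (homotopyPoint_ne s hsec z.1 z.2)⟩

lemma coe_sectionHomotopy (z : ↥(PConf m 2) × I) :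
    (sectionHomotopy s hsec z).1 = Fin.cons (homotopyPoint s z.1 z.2) z.1.1 := rfl

lemma continuous_sectionHomotopy (hcont : Continuous s) : Continuous (sectionHomotopy s hsec) := by
  refine continuous_induced_rng.2 ?_
  simp only [Function.comp_def, coe_sectionHomotopy]
  exact (((continuous_homotopyPoint s hcont).comp
      (continuous_fst.prodMk (continuous_subtype_val.comp continuous_snd))).finCons
    (continuous_subtype_val.comp continuous_fst))

lemma sectionHomotopy_at_zero (p : ↥(PConf m 2)) : sectionHomotopy s hsec (p, 0) = s p := by
  refine Subtype.ext ?_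
  rw [coe_sectionHomotopy, Set.Icc.coe_zero, homotopyPoint_at_zero, ← hsec p]
  exact Fin.cons_self_tail _

lemma sectionHomotopy_swap2 (hequiv : ∀ p, s (swap2 m p) = swap3 m (s p))
    (p : ↥(PConf m 2)) (t : I) :
    sectionHomotopy s hsec (swap2 m p, t) = swap3 m (sectionHomotopy s hsec (p, t)) := by
  refine Subtype.ext ?_
  rw [coe_sectionHomotopy, homotopyPoint_swap2 s hequiv]
  exact (cons_comp_swap _ _).symm

end MidpointSection

theorem uniqueness_of_midpoint_section_general (m : ℕ)
    (s : ↥(PConf m 2) → ↥(PConf m 3)) (hcont : Continuous s)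
    (hsec : ∀ p : ↥(PConf m 2), (s p : Fin 3 → E m) ∘ Fin.succ = (p : Fin 2 → E m)) :
    ∃ H : ↥(PConf m 2) × I → ↥(PConf m 3),
      Continuous H ∧
      (∀ p, H (p, 0) = s p) ∧
      (∀ p, (H (p, 1) : Fin 3 → E m)
        = Fin.cons (midpoint ℝ ((p : Fin 2 → E m) 0) ((p : Fin 2 → E m) 1))
            (p : Fin 2 → E m)) ∧
      (∀ p t, (H (p, t) : Fin 3 → E m) ∘ Fin.succ = (p : Fin 2 → E m)) ∧
      ((∀ p, s (swap2 m p) = swap3 m (s p)) →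
        ∀ p t, H (swap2 m p, t) = swap3 m (H (p, t))) :=
  open MidpointSection in
  ⟨sectionHomotopy s hsec, continuous_sectionHomotopy s hsec hcont,
    sectionHomotopy_at_zero s hsec,
    fun p => by rw [coe_sectionHomotopy, Set.Icc.coe_one, homotopyPoint_at_one],
    fun _ _ => Fin.cons_comp_succ _ _, sectionHomotopy_swap2 s hsec⟩

/-- Uniqueness for `n = 2`: every continuous section of the forgetful map
`g : PConf₃(D^m) → PConf₂(D^m)` is homotopic through sections to the midpoint
section; moreover if the section is `Σ₂`-equivariant, the homotopy may be taken
through `Σ₂`-equivariant sections. -/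
theorem uniqueness_of_midpoint_section (m : ℕ) (hm : 1 ≤ m)
    (s : ↥(PConf m 2) → ↥(PConf m 3)) (hcont : Continuous s)
    (hsec : ∀ p : ↥(PConf m 2), (s p : Fin 3 → E m) ∘ Fin.succ = (p : Fin 2 → E m)) :
    ∃ H : ↥(PConf m 2) × I → ↥(PConf m 3),
      Continuous H ∧
      (∀ p, H (p, 0) = s p) ∧
      (∀ p, (H (p, 1) : Fin 3 → E m)
        = Fin.cons (midpoint ℝ ((p : Fin 2 → E m) 0) ((p : Fin 2 → E m) 1))
            (p : Fin 2 → E m)) ∧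
      (∀ p t, (H (p, t) : Fin 3 → E m) ∘ Fin.succ = (p : Fin 2 → E m)) ∧
      ((∀ p, s (swap2 m p) = swap3 m (s p)) →
        ∀ p t, H (swap2 m p, t) = swap3 m (H (p, t))) :=
  uniqueness_of_midpoint_section_general m s hcont hsec
end
end
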